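/- Let $c_1, c_2, \delta > 0$. If $R_{GR} := 64 c_1^3 c_2 \delta^4 - 96 c_1^2 c_2 \delta^2 - 81 c_1^2 + 18 c_1 c_2 - c_2^2 < 0$, then $R_{GL} := 64 c_1^7 c_2 \delta^4 - 672 c_1^6 c_2^2 \delta^4 + 1796 c_1^5 c_2^3 \delta^4 - 168 c_1^4 c_2^4 \delta^4 + 4 c_1^3 c_2^5 \delta^4 + 384 c_1^6 c_2 \delta^2 - 400 c_1^5 c_2^2 \delta^2 - 2136 c_1^4 c_2^3 \delta^2 + 96 c_1^3 c_2^4 \delta^2 + 8 c_1^2 c_2^5 \delta^2 - 256 c_1^6 + 544 c_1^5 c_2 - 353 c_1^4 c_2^2 + 100 c_1^3 c_2^3 - 38 c_1^2 c_2^4 + 4 c_1 c_2^5 - c_2^6 < 0$. -/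
import Mathlib

set_option maxHeartbeats 2000000


noncomputable def RGR (c1 c2 δ : ℝ) : ℝ :=
  64 * c1 ^ 3 * c2 * δ ^ 4 - 96 * c1 ^ 2 * c2 * δ ^ 2 - 81 * c1 ^ 2 + 18 * c1 * c2 - c2 ^ 2

noncomputable def RGL (c1 c2 δ : ℝ) : ℝ :=
  64 * c1 ^ 7 * c2 * δ ^ 4 - 672 * c1 ^ 6 * c2 ^ 2 * δ ^ 4 + 1796 * c1 ^ 5 * c2 ^ 3 * δ ^ 4
  - 168 * c1 ^ 4 * c2 ^ 4 * δ ^ 4 + 4 * c1 ^ 3 * c2 ^ 5 * δ ^ 4 + 384 * c1 ^ 6 * c2 * δ ^ 2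
  - 400 * c1 ^ 5 * c2 ^ 2 * δ ^ 2 - 2136 * c1 ^ 4 * c2 ^ 3 * δ ^ 2 + 96 * c1 ^ 3 * c2 ^ 4 * δ ^ 2
  + 8 * c1 ^ 2 * c2 ^ 5 * δ ^ 2 - 256 * c1 ^ 6 + 544 * c1 ^ 5 * c2 - 353 * c1 ^ 4 * c2 ^ 2
  + 100 * c1 ^ 3 * c2 ^ 3 - 38 * c1 ^ 2 * c2 ^ 4 + 4 * c1 * c2 ^ 5 - c2 ^ 6

private lemma key_quad (p q x : ℝ) (hp : 0 < p) (hq : 0 < q) (hx : 0 < x)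
    (hX : x < (3*p + q)^2) :
    (16*p^8 - 168*p^6*q^2 + 449*p^4*q^4 - 42*p^2*q^6 + q^8) * x^2 + 16*p*q*(48*p^8 - 50*p^6*q^2 - 267*p^4*q^4 + 12*p^2*q^6 + q^8) * x - 16*(16*p^6 - 17*p^4*q^2 + 2*p^2*q^4 - q^6)^2 < 0 := by
  have hApos : (0:ℝ) < (3*p + q)^2 := by positivity
  -- V2 >= 0 certificate
  have hV2 : (0:ℝ) ≤ (15*q^10 + 2*p*q^9 - 183*p^2*q^8 - 308*p^3*q^7 + 761*p^4*q^6 + 3522*p^5*q^5 + 9639*p^6*q^4 + 8528*p^7*q^3 - 9448*p^8*q^2 - 3040*p^9*q + 2800*p^10) := by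
    nlinarith [mul_nonneg (mul_nonneg (pow_nonneg hp.le 0) (pow_nonneg hq.le 8)) (sq_nonneg (11*p - 3*q)),
      mul_nonneg (mul_nonneg (pow_nonneg hp.le 3) (pow_nonneg hq.le 5)) (sq_nonneg (12*p - 5*q)),
      mul_nonneg (mul_nonneg (pow_nonneg hp.le 2) (pow_nonneg hq.le 6)) (sq_nonneg (11*p - 3*q)),
      mul_nonneg (mul_nonneg (pow_nonneg hp.le 2) (pow_nonneg hq.le 6)) (sq_nonneg (12*p - 5*q)),
      mul_nonneg (mul_nonneg (pow_nonneg hp.le 1) (pow_nonneg hq.le 7)) (sq_nonneg (11*p - 3*q)),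
      mul_nonneg (mul_nonneg (pow_nonneg hp.le 5) (pow_nonneg hq.le 3)) (sq_nonneg (12*q)),
      mul_nonneg (mul_nonneg (pow_nonneg hp.le 6) (pow_nonneg hq.le 2)) (sq_nonneg (12*q)),
      mul_nonneg (mul_nonneg (pow_nonneg hp.le 8) (pow_nonneg hq.le 0)) (sq_nonneg (7*p - 12*q)),
      mul_nonneg (mul_nonneg (pow_nonneg hp.le 7) (pow_nonneg hq.le 1)) (sq_nonneg (11*p - 12*q)),
      mul_nonneg (mul_nonneg (pow_nonneg hp.le 7) (pow_nonneg hq.le 1)) (sq_nonneg (7*p - 12*q)),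
      mul_nonneg (mul_nonneg (pow_nonneg hp.le 6) (pow_nonneg hq.le 2)) (sq_nonneg (7*p - 12*q))]
  have hV : (0:ℝ) ≤ 16*(16*p^6 - 17*p^4*q^2 + 2*p^2*q^4 - q^6)^2 - 16*p*q*(48*p^8 - 50*p^6*q^2 - 267*p^4*q^4 + 12*p^2*q^6 + q^8)*(3*p + q)^2 - (16*p^8 - 168*p^6*q^2 + 449*p^4*q^4 - 42*p^2*q^6 + q^8)*((3*p + q)^2)^2 := by
    nlinarith [mul_nonneg (sq_nonneg (p - q)) hV2]
  rcases le_or_gt 0 ((16*p^8 - 168*p^6*q^2 + 449*p^4*q^4 - 42*p^2*q^6 + q^8)) with hQ | hQ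
  · -- convex / linear case
    rcases eq_or_ne ((16*p^6 - 17*p^4*q^2 + 2*p^2*q^4 - q^6)) 0 with hM | hM
    · -- M = 0 forces p = q
      have hfac : (p^2 - q^2) * (16*p^4 - p^2*q^2 + q^4) = 0 := by linear_combination hM
      have hpos4 : (0:ℝ) < 16*p^4 - p^2*q^2 + q^4 := by
        nlinarith [sq_nonneg (4*p^2 - q^2), mul_pos (mul_pos hp hp) (mul_pos hq hq)]
      have hpq2 : p^2 - q^2 = 0 := by
        rcases mul_eq_zero.mp hfac with h1 | h1
        · exact h1
        · exact absurd h1 (ne_of_gt hpos4)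
      have hpq : p = q := by
        have h2 : (p - q) * (p + q) = 0 := by linear_combination hpq2
        rcases mul_eq_zero.mp h2 with h3 | h3
        · linarith
        · linarith
      subst hpq
      have h5 : (p^8 * x) * x < (p^8 * x) * ((3*p+p)^2) :=
        mul_lt_mul_of_pos_left hX (mul_pos (pow_pos hp 8) hx)
      nlinarith [h5, hM]
    · -- M ≠ 0
      have hM2 : (0:ℝ) < (16*p^6 - 17*p^4*q^2 + 2*p^2*q^4 - q^6)^2 := by positivity
      have t1 : (0:ℝ) ≤ (16*p^8 - 168*p^6*q^2 + 449*p^4*q^4 - 42*p^2*q^6 + q^8) * (3*p + q)^2 * x * ((3*p + q)^2 - x) :=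
        mul_nonneg (mul_nonneg (mul_nonneg hQ hApos.le) hx.le) (by linarith)
      have t3 : (0:ℝ) < 16*(16*p^6 - 17*p^4*q^2 + 2*p^2*q^4 - q^6)^2 * ((3*p + q)^2 - x) := by
        have := sub_pos.mpr hX
        positivity
      nlinarith [t1, t3, mul_nonneg hx.le hV, hApos]
  · -- concave case: Q < 0
    have hT2 : (0:ℝ) < (4*q^8 + 16*p*q^7 - 56*p^2*q^6 - 32*p^3*q^5 + 612*p^4*q^4 - 880*p^5*q^3 + 208*p^6*q^2 + 896*p^7*q + 256*p^8) := by
      nlinarith [pow_pos hp 8, pow_pos hq 8,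
      mul_nonneg (mul_nonneg (pow_nonneg hp.le 0) (pow_nonneg hq.le 6)) (sq_nonneg (12*p - 7*q)),
      mul_nonneg (mul_nonneg (pow_nonneg hp.le 1) (pow_nonneg hq.le 5)) (sq_nonneg (12*p - 7*q)),
      mul_nonneg (mul_nonneg (pow_nonneg hp.le 4) (pow_nonneg hq.le 2)) (sq_nonneg (12*p - 7*q)),
      mul_nonneg (mul_nonneg (pow_nonneg hp.le 2) (pow_nonneg hq.le 4)) (sq_nonneg (12*p - 11*q)),
      mul_nonneg (mul_nonneg (pow_nonneg hp.le 2) (pow_nonneg hq.le 4)) (sq_nonneg (12*p - 5*q)),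
      mul_nonneg (mul_nonneg (pow_nonneg hp.le 5) (pow_nonneg hq.le 1)) (sq_nonneg (12*p - 11*q)),
      mul_nonneg (mul_nonneg (pow_nonneg hp.le 4) (pow_nonneg hq.le 2)) (sq_nonneg (11*p - 12*q)),
      mul_nonneg (mul_nonneg (pow_nonneg hp.le 5) (pow_nonneg hq.le 1)) (sq_nonneg (12*p)),
      mul_nonneg (mul_nonneg (pow_nonneg hp.le 6) (pow_nonneg hq.le 0)) (sq_nonneg (12*p))]
    have hpq : p ≠ q := by
      intro he
      rw [he] at hQ
      nlinarith [pow_pos hq 8]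
    have hT : (0:ℝ) < (256*p^10 - 1328*p^8*q^2 + 2580*p^6*q^4 + 620*p^4*q^6 - 84*p^2*q^8 + 4*q^10) + 8*p*q*(48*p^8 - 50*p^6*q^2 - 267*p^4*q^4 + 12*p^2*q^6 + q^8) := by
      nlinarith [mul_pos (pow_two_pos_of_ne_zero (sub_ne_zero.mpr hpq)) hT2]
    have hW4 : (0:ℝ) ≤ (12*q^8 + 16*p*q^7 - 72*p^2*q^6 + 652*p^4*q^4 - 144*p^5*q^3 - 1360*p^6*q^2 + 2176*p^7*q + 1792*p^8) := by
      nlinarith [mul_nonneg (mul_nonneg (pow_nonneg hp.le 0) (pow_nonneg hq.le 6)) (sq_nonneg (11*p - 12*q)),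
      mul_nonneg (mul_nonneg (pow_nonneg hp.le 2) (pow_nonneg hq.le 4)) (sq_nonneg (12*p - 11*q)),
      mul_nonneg (mul_nonneg (pow_nonneg hp.le 0) (pow_nonneg hq.le 6)) (sq_nonneg (12*p - 7*q)),
      mul_nonneg (mul_nonneg (pow_nonneg hp.le 1) (pow_nonneg hq.le 5)) (sq_nonneg (12*p - 7*q)),
      mul_nonneg (mul_nonneg (pow_nonneg hp.le 5) (pow_nonneg hq.le 1)) (sq_nonneg (12*q)),
      mul_nonneg (mul_nonneg (pow_nonneg hp.le 4) (pow_nonneg hq.le 2)) (sq_nonneg (11*p - 12*q)),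
      mul_nonneg (mul_nonneg (pow_nonneg hp.le 5) (pow_nonneg hq.le 1)) (sq_nonneg (12*p - 11*q)),
      mul_nonneg (mul_nonneg (pow_nonneg hp.le 5) (pow_nonneg hq.le 1)) (sq_nonneg (12*p)),
      mul_nonneg (mul_nonneg (pow_nonneg hp.le 6) (pow_nonneg hq.le 0)) (sq_nonneg (12*p))]
    have hW : (0:ℝ) ≤ 16*(16*p^6 - 17*p^4*q^2 + 2*p^2*q^4 - q^6)^2 - (3*p + q)^2 * ((256*p^10 - 1328*p^8*q^2 + 2580*p^6*q^4 + 620*p^4*q^6 - 84*p^2*q^8 + 4*q^10) + 8*p*q*(48*p^8 - 50*p^6*q^2 - 267*p^4*q^4 + 12*p^2*q^6 + q^8)) := by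
      nlinarith [mul_nonneg (sq_nonneg ((p - q)^2)) hW4]
    have hS : (0:ℝ) ≤ (256*p^10 - 1328*p^8*q^2 + 2580*p^6*q^4 + 620*p^4*q^6 - 84*p^2*q^8 + 4*q^10) := by
      nlinarith [mul_nonneg (mul_nonneg (pow_nonneg hp.le 2) (pow_nonneg hq.le 6)) (sq_nonneg (12*p - 5*q)),
      mul_nonneg (mul_nonneg (pow_nonneg hp.le 1) (pow_nonneg hq.le 7)) (sq_nonneg (11*p - 3*q)),
      mul_nonneg (mul_nonneg (pow_nonneg hp.le 2) (pow_nonneg hq.le 6)) (sq_nonneg (11*p - 2*q)),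
      mul_nonneg (mul_nonneg (pow_nonneg hp.le 0) (pow_nonneg hq.le 8)) (sq_nonneg (11*p - 3*q)),
      mul_nonneg (mul_nonneg (pow_nonneg hp.le 4) (pow_nonneg hq.le 4)) (sq_nonneg (12*q)),
      mul_nonneg (mul_nonneg (pow_nonneg hp.le 6) (pow_nonneg hq.le 2)) (sq_nonneg (12*q)),
      mul_nonneg (mul_nonneg (pow_nonneg hp.le 7) (pow_nonneg hq.le 1)) (sq_nonneg (11*p - 12*q)),
      mul_nonneg (mul_nonneg (pow_nonneg hp.le 7) (pow_nonneg hq.le 1)) (sq_nonneg (7*p - 12*q)),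
      mul_nonneg (mul_nonneg (pow_nonneg hp.le 6) (pow_nonneg hq.le 2)) (sq_nonneg (5*p - 12*q)),
      mul_nonneg (mul_nonneg (pow_nonneg hp.le 8) (pow_nonneg hq.le 0)) (sq_nonneg (7*p - 12*q))]
    have h6 : (256*p^10 - 1328*p^8*q^2 + 2580*p^6*q^4 + 620*p^4*q^6 - 84*p^2*q^8 + 4*q^10) - 8*p*q*(48*p^8 - 50*p^6*q^2 - 267*p^4*q^4 + 12*p^2*q^6 + q^8) - (16*p^8 - 168*p^6*q^2 + 449*p^4*q^4 - 42*p^2*q^6 + q^8)*(3*p + q)^2 ≤ 0 := by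
      nlinarith [hT, hW, mul_nonpos_of_nonpos_of_nonneg hQ.le hW]
    have hLA : (256*p^10 - 1328*p^8*q^2 + 2580*p^6*q^4 + 620*p^4*q^6 - 84*p^2*q^8 + 4*q^10) ≤ (16*p^8 - 168*p^6*q^2 + 449*p^4*q^4 - 42*p^2*q^6 + q^8)*(3*p + q)^2 + 8*p*q*(48*p^8 - 50*p^6*q^2 - 267*p^4*q^4 + 12*p^2*q^6 + q^8) := by linarith
    have hLx : (16*p^8 - 168*p^6*q^2 + 449*p^4*q^4 - 42*p^2*q^6 + q^8)*(3*p + q)^2 + 8*p*q*(48*p^8 - 50*p^6*q^2 - 267*p^4*q^4 + 12*p^2*q^6 + q^8) < (16*p^8 - 168*p^6*q^2 + 449*p^4*q^4 - 42*p^2*q^6 + q^8)*x + 8*p*q*(48*p^8 - 50*p^6*q^2 - 267*p^4*q^4 + 12*p^2*q^6 + q^8) := by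
      nlinarith [mul_lt_mul_of_neg_left hX hQ]
    have hL2 : (256*p^10 - 1328*p^8*q^2 + 2580*p^6*q^4 + 620*p^4*q^6 - 84*p^2*q^8 + 4*q^10)^2 < ((16*p^8 - 168*p^6*q^2 + 449*p^4*q^4 - 42*p^2*q^6 + q^8)*x + 8*p*q*(48*p^8 - 50*p^6*q^2 - 267*p^4*q^4 + 12*p^2*q^6 + q^8))^2 := by
      nlinarith [mul_pos (show (0:ℝ) < ((16*p^8 - 168*p^6*q^2 + 449*p^4*q^4 - 42*p^2*q^6 + q^8)*x + 8*p*q*(48*p^8 - 50*p^6*q^2 - 267*p^4*q^4 + 12*p^2*q^6 + q^8)) - (256*p^10 - 1328*p^8*q^2 + 2580*p^6*q^4 + 620*p^4*q^6 - 84*p^2*q^8 + 4*q^10) by linarith)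
        (show (0:ℝ) < ((16*p^8 - 168*p^6*q^2 + 449*p^4*q^4 - 42*p^2*q^6 + q^8)*x + 8*p*q*(48*p^8 - 50*p^6*q^2 - 267*p^4*q^4 + 12*p^2*q^6 + q^8)) + (256*p^10 - 1328*p^8*q^2 + 2580*p^6*q^4 + 620*p^4*q^6 - 84*p^2*q^8 + 4*q^10) by linarith)]
    nlinarith [hL2, hQ]

theorem stmt7 (c1 c2 δ : ℝ) (hc1 : 0 < c1) (hc2 : 0 < c2) (hδ : 0 < δ)
    (h : RGR c1 c2 δ < 0) : RGL c1 c2 δ < 0 := by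
  obtain ⟨p, hp, hpc⟩ : ∃ p : ℝ, 0 < p ∧ p^2 = c1 :=
    ⟨Real.sqrt c1, Real.sqrt_pos.mpr hc1, Real.sq_sqrt hc1.le⟩
  obtain ⟨q, hq, hqc⟩ : ∃ q : ℝ, 0 < q ∧ q^2 = c2 :=
    ⟨Real.sqrt c2, Real.sqrt_pos.mpr hc2, Real.sq_sqrt hc2.le⟩
  subst hpc; subst hqc
  have hx : (0:ℝ) < 8*p^3*q*δ^2 := by positivity
  have hRGReq : RGR (p^2) (q^2) δ
      = (8*p^3*q*δ^2 - (3*p + q)^2) * (8*p^3*q*δ^2 + (3*p - q)^2) := by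
    unfold RGR; ring
  rw [hRGReq] at h
  have hB : (0:ℝ) < 8*p^3*q*δ^2 + (3*p - q)^2 := by positivity
  have hX : 8*p^3*q*δ^2 < (3*p + q)^2 := by nlinarith [h, hB]
  have hkey := key_quad p q (8*p^3*q*δ^2) hp hq hx hX
  have hRGLeq : 16 * RGL (p^2) (q^2) δ
      = (16*p^8 - 168*p^6*q^2 + 449*p^4*q^4 - 42*p^2*q^6 + q^8) * (8*p^3*q*δ^2)^2 + 16*p*q*(48*p^8 - 50*p^6*q^2 - 267*p^4*q^4 + 12*p^2*q^6 + q^8) * (8*p^3*q*δ^2) - 16*(16*p^6 - 17*p^4*q^2 + 2*p^2*q^4 - q^6)^2 := by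
    unfold RGL; ring
  linarith [hkey, hRGLeq]
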